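/- Let T > 0, let w be a complex number with Re w ≥ δ|w| for some δ > 0, |1 + e^{-Tw}| ≥ c₀ > 0, and define K(t,s) as the anti-periodic kernel K(t,s) = (e^{-w(t-s)} - e^{-w(T-t+s)})/(2w(1+e^{-Tw})) for s ≤ t and K(t,s) = (e^{-w(s-t)} - e^{-w(T+t-s)})/(2w(1+e^{-Tw})) for t ≤ s. Then there is a constant C = C(δ, c₀) (independent of T and w) such that sup_{t∈[0,T]} ∫₀ᵀ |K(t,s)| ds ≤ C/|w|². -/

import Mathlib

/-! Writing `r = |t - s|`, the kernel is `(e^{-wr} - e^{-w(T-r)}) / (2w(1 + e^{-Tw}))`.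
Since `Re w ≥ δ|w|`, both exponentials are dominated by `e^{-δ|w|r}` and `e^{-δ|w|(T-r)}`,
each of which integrates to at most `1/(δ|w|)` on each side of `t`; the denominator is at
least `2|w|c₀`. -/

open Complex intervalIntegral

/-- The anti-periodic Green kernel `K_w(t,s)` on `[0,T]`. -/
noncomputable def K (T : ℝ) (w : ℂ) (t s : ℝ) : ℂ :=
  if s ≤ t then
    (Complex.exp (-w * ((t : ℂ) - s)) - Complex.exp (-w * ((T : ℂ) - t + s))) /
      (2 * w * (1 + Complex.exp (-(T : ℂ) * w)))
  else
    (Complex.exp (-w * ((s : ℂ) - t)) - Complex.exp (-w * ((T : ℂ) + t - s))) /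
      (2 * w * (1 + Complex.exp (-(T : ℂ) * w)))

lemma K_eq_abs (T : ℝ) (w : ℂ) (t s : ℝ) :
    K T w t s = (cexp (-w * ((|t - s| : ℝ) : ℂ)) - cexp (-w * ((T - |t - s| : ℝ) : ℂ))) /
      (2 * w * (1 + cexp (-(T : ℂ) * w))) := by
  unfold K
  split_ifs with hst
  · rw [abs_of_nonneg (sub_nonneg.2 hst)]
    push_cast
    ring_nf
  · rw [abs_of_neg (sub_neg.2 (not_le.1 hst))]
    push_cast
    ring_nf

lemma continuous_K (T : ℝ) (w : ℂ) (t : ℝ) : Continuous (K T w t) := by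
  rw [funext (K_eq_abs T w t)]
  fun_prop

lemma norm_cexp_neg_mul_le {w : ℂ} {a r : ℝ} (ha : a ≤ w.re) (hr : 0 ≤ r) :
    ‖cexp (-w * r)‖ ≤ Real.exp (-a * r) := by
  rw [norm_exp, Real.exp_le_exp]
  simpa using mul_le_mul_of_nonneg_right ha hr

lemma norm_K_le {T a t s : ℝ} {w : ℂ} (ha : a ≤ w.re) (hts : |t - s| ≤ T) :
    ‖K T w t s‖ ≤ (Real.exp (-a * |t - s|) + Real.exp (-a * (T - |t - s|))) /
      ‖2 * w * (1 + cexp (-(T : ℂ) * w))‖ := by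
  rw [K_eq_abs, norm_div]
  gcongr
  exact (norm_sub_le _ _).trans <| add_le_add (norm_cexp_neg_mul_le ha (abs_nonneg _))
    (norm_cexp_neg_mul_le ha (sub_nonneg.2 hts))

lemma integral_comp_abs_sub {g : ℝ → ℝ} (hg : Continuous g) {a b t : ℝ} (ht : t ∈ Set.Icc a b) :
    ∫ s in a..b, g |t - s| = (∫ r in 0..t - a, g r) + ∫ r in 0..b - t, g r := by
  have hint : ∀ u v : ℝ, IntervalIntegrable (fun s => g |t - s|) MeasureTheory.volume u v :=
    fun u v => (hg.comp (continuous_const.sub continuous_id).abs).intervalIntegrable u v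
  rw [← integral_add_adjacent_intervals (hint a t) (hint t b)]
  congr 1
  · rw [integral_congr (g := fun s => g (t - s)) fun s hs => ?_, integral_comp_sub_left,
      sub_self]
    rw [Set.uIcc_of_le ht.1] at hs
    simp only [abs_of_nonneg (sub_nonneg.2 hs.2)]
  · rw [integral_congr (g := fun s => g (s - t)) fun s hs => ?_, integral_comp_sub_right,
      sub_self]
    rw [Set.uIcc_of_le ht.2] at hs
    simp only [abs_sub_comm t s, abs_of_nonneg (sub_nonneg.2 hs.1)]

lemma integral_exp_neg_mul_le {a u : ℝ} (ha : 0 < a) (hu : 0 ≤ u) (v : ℝ) :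
    ∫ r in u..v, Real.exp (-a * r) ≤ 1 / a := by
  rw [integral_comp_mul_left Real.exp (neg_ne_zero.2 ha.ne'), integral_exp, smul_eq_mul,
    inv_neg, neg_mul, ← mul_neg, neg_sub, ← div_eq_inv_mul]
  gcongr
  calc Real.exp (-a * u) - Real.exp (-a * v) ≤ Real.exp (-a * u) :=
        sub_le_self _ (Real.exp_pos _).le
    _ ≤ 1 := Real.exp_le_one_iff.2 (by nlinarith)

lemma integral_exp_add_exp_sub_le {a T x : ℝ} (ha : 0 < a) (hx : x ≤ T) :
    ∫ r in 0..x, (Real.exp (-a * r) + Real.exp (-a * (T - r))) ≤ 2 / a := by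
  rw [integral_add (Continuous.intervalIntegrable (by fun_prop) _ _)
    (Continuous.intervalIntegrable (by fun_prop) _ _),
    integral_comp_sub_left (fun r => Real.exp (-a * r))]
  calc _ ≤ 1 / a + 1 / a := add_le_add (integral_exp_neg_mul_le ha le_rfl x)
        (integral_exp_neg_mul_le ha (sub_nonneg.2 hx) (T - 0))
    _ = 2 / a := by ring

/-- Uniform kernel estimate: for `Re w ≥ δ|w|`, `|1 + e^{-Tw}| ≥ c₀`, there is a
constant `C = C(δ, c₀)` independent of `T` and `w` with
`sup_{t ∈ [0,T]} ∫₀ᵀ |K(t,s)| ds ≤ C/|w|²`. -/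
theorem stmt_4 (δ c₀ : ℝ) (hδ : 0 < δ) (hc₀ : 0 < c₀) :
    ∃ C : ℝ, 0 < C ∧ ∀ (T : ℝ), 0 < T → ∀ w : ℂ,
      δ * ‖w‖ ≤ w.re → c₀ ≤ ‖1 + Complex.exp (-(T : ℂ) * w)‖ →
      ∀ t ∈ Set.Icc (0 : ℝ) T,
        (∫ s in (0 : ℝ)..T, ‖K T w t s‖) ≤ C / (‖w‖) ^ 2 := by
  refine ⟨2 / (δ * c₀), by positivity, fun T _ w hre hc t ht => ?_⟩
  rcases eq_or_ne w 0 with rfl | hw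
  · simp [K]
  have hw' : 0 < ‖w‖ := norm_pos_iff.2 hw
  set a := δ * ‖w‖
  have ha : 0 < a := by positivity
  set D := ‖2 * w * (1 + cexp (-(T : ℂ) * w))‖
  have hD : 2 * ‖w‖ * c₀ ≤ D := by
    simp only [D, norm_mul, Complex.norm_two]
    gcongr
  calc (∫ s in (0 : ℝ)..T, ‖K T w t s‖)
      ≤ ∫ s in (0 : ℝ)..T, (Real.exp (-a * |t - s|) + Real.exp (-a * (T - |t - s|))) / D :=
        integral_mono_on (ht.1.trans ht.2) ((continuous_K T w t).norm.intervalIntegrable _ _)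
          (Continuous.intervalIntegrable (by fun_prop) _ _) fun s hs => norm_K_le hre
            (abs_sub_le_iff.2 ⟨by linarith [ht.2, hs.1], by linarith [ht.1, hs.2]⟩)
    _ = ((∫ r in (0 : ℝ)..t - 0, (Real.exp (-a * r) + Real.exp (-a * (T - r)))) +
          ∫ r in (0 : ℝ)..T - t, (Real.exp (-a * r) + Real.exp (-a * (T - r)))) / D := by
        rw [integral_div,
          integral_comp_abs_sub (g := fun r => Real.exp (-a * r) + Real.exp (-a * (T - r)))
            (by fun_prop) ht]
    _ ≤ (2 / a + 2 / a) / (2 * ‖w‖ * c₀) := by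
        gcongr
        · exact integral_exp_add_exp_sub_le ha (by linarith [ht.2])
        · exact integral_exp_add_exp_sub_le ha (by linarith [ht.1])
    _ = 2 / (δ * c₀) / ‖w‖ ^ 2 := by
        field_simp
        ring
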